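/- Let S be an additively reduced, additively Furstenberg semidomain with A₊(S) = S^×, and G a torsion-free abelian group. Every binomial f = s_0 x^{g_0} + s_1 x^{g_1} ∈ S[G] with s_0, s_1 ∈ S* both non-units of S can be written as the sum of two irreducible elements of S[G]. -/

import Mathlib

/-- Witness that `S` is a semidomain: an injective semiring hom into an integral domain. -/
structure SemidomainWitness (S : Type*) [CommSemiring S] where
  D : Type
  [commRing : CommRing D]
  [isDomain : IsDomain D]
  emb : S →+* D
  inj : Function.Injective emb

/-- `S` is a semidomain, i.e. (isomorphic to) a subsemiring of an integral domain. -/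
def IsSemidomain (S : Type*) [CommSemiring S] : Prop := Nonempty (SemidomainWitness S)

/-- `S` is additively reduced: `0` is the only additively invertible element. -/
def AddReduced (S : Type*) [AddZeroClass S] : Prop := ∀ a b : S, a + b = 0 → a = 0

/-- `s` is an atom of the additive monoid `(S, +)` (for `S` additively reduced):
it is nonzero and cannot be written as a sum of two nonzero elements. -/
def IsAddAtom {S : Type*} [AddZeroClass S] (s : S) : Prop :=
  s ≠ 0 ∧ ∀ a b : S, s = a + b → a = 0 ∨ b = 0

/-- `S` is additively Furstenberg: every nonzero element is divisible in `(S, +)`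
by an additive atom. -/
def AddFurstenberg (S : Type*) [AddZeroClass S] : Prop :=
  ∀ s : S, s ≠ 0 → ∃ a t : S, IsAddAtom a ∧ s = a + t


section GroupAlg
variable {S : Type*} [CommSemiring S] {G : Type*} [AddCommGroup G]

/-- A monomial `s·x^g` in the group semidomain `S[G]`. -/
def IsMonomial (f : AddMonoidAlgebra S G) : Prop :=
  ∃ (g : G) (s : S), f = AddMonoidAlgebra.single g s

/-- `f` is monolithic: every factorization of `f` in `S[G]` has a monomial factor. -/
def Monolithic (f : AddMonoidAlgebra S G) : Prop :=
  f ≠ 0 ∧ ∀ p q : AddMonoidAlgebra S G, f = p * q → IsMonomial p ∨ IsMonomial q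

end GroupAlg

/-!
Split the coefficients with additive atoms: `s₀ = a + t`, `s₁ = b + r` with `a, b` units, and
`t, r ≠ 0` because `s₀, s₁` are not units. Then
`f = (a x^{g₀} + r x^{g₁}) + (b x^{g₁} + t x^{g₀})`, and a binomial with a unit coefficient is
irreducible: since `S` is additively reduced and has no zero divisors, supports add under
multiplication, so a unit of `S[G]` has one-element support, and by Cauchy–Davenport in the
torsion-free group `G` any factorization of a binomial has a monomial factor, whose coefficient
divides the unit coefficient.
-/

open AddMonoidAlgebra
open scoped Pointwise

lemma IsSemidomain.noZeroDivisors {S : Type*} [CommSemiring S] (hS : IsSemidomain S) :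
    NoZeroDivisors S := by
  obtain ⟨⟨D, emb, inj⟩⟩ := hS
  exact inj.noZeroDivisors emb (map_zero emb) (map_mul emb)

lemma AddReduced.eq_zero_of_sum_eq_zero {S ι : Type*} [AddCommMonoid S] (hred : AddReduced S)
    {s : Finset ι} {f : ι → S} (hs : ∑ i ∈ s, f i = 0) : ∀ i ∈ s, f i = 0 := by
  classical
  induction s using Finset.cons_induction with
  | empty => simp
  | cons a s ha ih =>
    rw [Finset.sum_cons] at hs
    have hfa : f a = 0 := hred _ _ hs
    rw [hfa, zero_add] at hs
    simpa [hfa] using ih hs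

lemma isAddTorsionFree_of_nsmul_eq_zero {G : Type*} [AddCommGroup G]
    (h : ∀ (g : G) (n : ℕ), n ≠ 0 → n • g = 0 → g = 0) : IsAddTorsionFree G :=
  ⟨fun n hn a b hab => sub_eq_zero.1 (h _ n hn (by rw [nsmul_sub, sub_eq_zero]; exact hab))⟩

lemma Finset.card_eq_one_or_card_eq_one_of_add_eq_pair {G : Type*} [DecidableEq G]
    [AddCommGroup G] [IsAddTorsionFree G] {A B : Finset G} {g h : G} (hgh : g ≠ h)
    (hAB : A + B = {g, h}) :
    A.card = 1 ∨ B.card = 1 := by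
  have hne : (A + B).Nonempty := by simp [hAB]
  have hcd := cauchy_davenport_of_isAddTorsionFree hne.of_add_left hne.of_add_right
  rw [hAB, Finset.card_pair hgh] at hcd
  have := hne.of_add_left.card_pos
  have := hne.of_add_right.card_pos
  omega

section
variable {S G : Type*}

lemma support_coeff_mul_eq [Semiring S] [NoZeroDivisors S] (hred : AddReduced S) [Add G]
    [DecidableEq G] (p q : AddMonoidAlgebra S G) :
    (p * q).coeff.support = p.coeff.support + q.coeff.support := by
  refine (support_coeff_mul_subset p q).antisymm fun x hx => ?_
  obtain ⟨a, ha, b, hb, rfl⟩ := Finset.mem_add.1 hx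
  rw [Finsupp.mem_support_iff] at ha hb ⊢
  intro hzero
  rw [coeff_mul] at hzero
  have hab := hred.eq_zero_of_sum_eq_zero
    (hred.eq_zero_of_sum_eq_zero hzero a (Finsupp.mem_support_iff.2 ha)) b
    (Finsupp.mem_support_iff.2 hb)
  simp [mul_ne_zero ha hb] at hab

lemma isUnit_single [Semiring S] [AddGroup G] {c : S} (hc : IsUnit c) (k : G) :
    IsUnit (single k c : AddMonoidAlgebra S G) := by
  obtain ⟨c, rfl⟩ := hc
  exact ⟨⟨single k c, single (-k) ↑c⁻¹, by simp [single_mul_single, one_def],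
    by simp [single_mul_single, one_def]⟩, rfl⟩

lemma card_support_eq_one_of_isUnit [Semiring S] [Nontrivial S] [NoZeroDivisors S]
    (hred : AddReduced S) [AddGroup G] {p : AddMonoidAlgebra S G} (hp : IsUnit p) :
    p.coeff.support.card = 1 := by
  classical
  obtain ⟨q, hpq⟩ := hp.exists_right_inv
  have hq : q.coeff.support.Nonempty := by
    rw [Finsupp.support_nonempty_iff, Ne, coeff_eq_zero]
    rintro rfl
    simp at hpq
  have hp0 : p.coeff.support.Nonempty := by
    rw [Finsupp.support_nonempty_iff, Ne, coeff_eq_zero]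
    exact hp.ne_zero
  have hle := Finset.card_le_card_add_right (s := p.coeff.support) hq
  rw [← support_coeff_mul_eq hred, hpq, one_def, coeff_single,
    Finsupp.support_single _ one_ne_zero, Finset.card_singleton] at hle
  have := hp0.card_pos
  omega

lemma isUnit_of_card_support_eq_one [CommSemiring S] [AddGroup G] {p q : AddMonoidAlgebra S G}
    {g : G} (hp : p.coeff.support.card = 1) (hpq : IsUnit ((p * q).coeff g)) : IsUnit p := by
  obtain ⟨k, hk⟩ := Finset.card_eq_one.1 hp
  have hpk : p = single k (p.coeff k) := ext (Finsupp.support_eq_singleton.1 hk).2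
  rw [hpk, coeff_single_mul_apply] at hpq
  rw [hpk]
  exact isUnit_single (isUnit_of_mul_isUnit_left hpq) k

theorem irreducible_single_add_single [CommSemiring S] [NoZeroDivisors S] (hred : AddReduced S)
    [AddCommGroup G] [IsAddTorsionFree G] {u s : S} {g h : G} (hu : IsUnit u) (hs : s ≠ 0)
    (hgh : g ≠ h) : Irreducible (single g u + single h s : AddMonoidAlgebra S G) := by
  classical
  have : Nontrivial S := ⟨⟨s, 0, hs⟩⟩
  set b := (single g u + single h s : AddMonoidAlgebra S G)
  have hsupp : b.coeff.support = {g, h} := by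
    rw [coeff_add, coeff_single, coeff_single, Finsupp.support_add_eq,
      Finsupp.support_single _ hu.ne_zero, Finsupp.support_single _ hs]
    · rfl
    · simpa [Finsupp.support_single _ hu.ne_zero, Finsupp.support_single _ hs] using hgh
  have hbg : IsUnit (b.coeff g) := by
    simpa [b, coeff_add, coeff_single, Finsupp.single_apply, hgh.symm] using hu
  refine ⟨fun hb => ?_, fun p q hpq => ?_⟩
  · have := card_support_eq_one_of_isUnit hred hb
    rw [hsupp, Finset.card_pair hgh] at this
    omega
  · have hPQ : p.coeff.support + q.coeff.support = {g, h} := by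
      rw [← support_coeff_mul_eq hred, ← hpq, hsupp]
    rcases Finset.card_eq_one_or_card_eq_one_of_add_eq_pair hgh hPQ with hp | hq
    · exact .inl (isUnit_of_card_support_eq_one hp (hpq ▸ hbg))
    · exact .inr (isUnit_of_card_support_eq_one hq (mul_comm p q ▸ hpq ▸ hbg))

end

/-- For `S` additively reduced, additively Furstenberg with `A₊(S) = S^×` and `G`
torsion-free abelian: a binomial both of whose nonzero coefficients are non-units is a sum
of two irreducible elements of `S[G]`. -/
theorem binomial_sum_of_two_irreducibles
    {S : Type*} [CommSemiring S] {G : Type*} [AddCommGroup G]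
    (hS : IsSemidomain S) (hred : AddReduced S) (hfur : AddFurstenberg S)
    (hatoms : ∀ a : S, IsAddAtom a ↔ IsUnit a)
    (htf : ∀ (g : G) (n : ℕ), n ≠ 0 → n • g = 0 → g = 0)
    (s₀ s₁ : S) (g₀ g₁ : G) (hs₀ : s₀ ≠ 0) (hs₁ : s₁ ≠ 0) (hgg : g₀ ≠ g₁)
    (hu₀ : ¬ IsUnit s₀) (hu₁ : ¬ IsUnit s₁)
    (f : AddMonoidAlgebra S G)
    (hf : f = AddMonoidAlgebra.single g₀ s₀ + AddMonoidAlgebra.single g₁ s₁) :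
    ∃ p q : AddMonoidAlgebra S G, Irreducible p ∧ Irreducible q ∧ f = p + q := by
  have := hS.noZeroDivisors
  have := isAddTorsionFree_of_nsmul_eq_zero htf
  obtain ⟨a, t, ha, rfl⟩ := hfur s₀ hs₀
  obtain ⟨b, r, hb, rfl⟩ := hfur s₁ hs₁
  rw [hatoms] at ha hb
  have ht : t ≠ 0 := by
    rintro rfl
    exact hu₀ (by simpa using ha)
  have hr : r ≠ 0 := by
    rintro rfl
    exact hu₁ (by simpa using hb)
  refine ⟨single g₀ a + single g₁ r, single g₁ b + single g₀ t,
    irreducible_single_add_single hred ha hr hgg,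
    irreducible_single_add_single hred hb ht hgg.symm, ?_⟩
  rw [hf, single_add, single_add]
  abel
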